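/- Let V be a complete discrete valuation ring with uniformiser π and fraction field F. Let W be a torsion-free π-adically complete V-module, i.e., a complete normed V-module whose gauge norm ‖x‖ := inf{|π|^j : π^{-j} x ∈ M} (M the unit ball) takes values in {|π|^n : n ∈ ℤ} ∪ {0}. Then the Banach F-vector space F·M with the gauge norm is isometrically isomorphic to C₀(D, F) for some set D, and this isomorphism maps M onto the unit ball C₀(D, V). -/

import Mathlib

/-!
Statement 19: Structure theorem.  Let `V` be a complete discrete valuation ring with
uniformiser `π`.  Every `π`-adically complete, torsion-free `V`-module `M` (the unit ball
of the Banach space `F·M` with the gauge norm) is isomorphic to `C₀(D, V)` for some set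
`D`; equivalently, `F·M` with the gauge norm is isometrically isomorphic to `C₀(D, F)` by
an isomorphism carrying `M` onto the unit ball `C₀(D, V)`.
-/

/-- `C₀(D, V)` as a submodule of `D → V`: functions whose values are eventually divisible
by every power of `π` outside a finite set (the unit ball of `C₀(D, F)`). -/
def C0sub (V : Type) [CommRing V] (π : V) (D : Type) : Submodule V (D → V) where
  carrier := {f | ∀ n : ℕ, {x : D | ¬ π ^ n ∣ f x}.Finite}
  zero_mem' := fun n => Set.finite_empty.subset fun x hx => absurd (dvd_zero _) hx
  add_mem' := fun {f g} hf hg n => ((hf n).union (hg n)).subset (by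
    intro x hx
    by_cases h1 : π ^ n ∣ f x
    · by_cases h2 : π ^ n ∣ g x
      · exact absurd (dvd_add h1 h2) hx
      · exact Or.inr h2
    · exact Or.inl h1)
  smul_mem' := fun c f hf n => (hf n).subset (by
    intro x hx h
    exact hx (by simpa using h.mul_left c))

/-!
Lift a basis of the residue vector space `M / πM` to a family `e : D → M`. For `f ∈ C₀(D, V)`
the sum `∑ d, f d • e d` converges `π`-adically in `M`, which gives a `V`-linear map
`C₀(D, V) → M`. Since `M` is `π`-torsion-free, the independence of the `e d` modulo `π`
propagates to independence modulo every `π ^ n`, so the map is injective (`V` being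
`π`-adically separated). Since the `e d` span `M` modulo `π`, every `m : M` has a `π`-adic
expansion `m = ∑ₗ πˡ • ∑ d, gₗ d • e d` with finitely supported digits `gₗ`, and the coefficients
`∑ₗ πˡ gₗ d` converge in the complete ring `V`; so the map is surjective.
-/

open Finset
open Finsupp (linearCombination linearCombination_apply ofSupportFinite)

section PowSMulTop

variable {V : Type*} [CommRing V] {π : V} {M P : Type*} [AddCommGroup M] [Module V M]
  [AddCommGroup P] [Module V P]

theorem mem_span_singleton_smul_top_iff {a : V} {x : M} :
    x ∈ (Ideal.span {a} • ⊤ : Submodule V M) ↔ ∃ y, a • y = x := by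
  rw [Submodule.ideal_span_singleton_smul, Submodule.mem_smul_pointwise_iff_exists]
  simp

theorem mem_span_singleton_pow_smul_top_iff {n : ℕ} {x : M} :
    x ∈ (Ideal.span {π} ^ n • ⊤ : Submodule V M) ↔ ∃ y, π ^ n • y = x := by
  rw [Ideal.span_singleton_pow, mem_span_singleton_smul_top_iff]

theorem smodEq_span_singleton_pow_iff_dvd {n : ℕ} {a b : V} :
    a ≡ b [SMOD (Ideal.span {π} ^ n • ⊤ : Submodule V V)] ↔ π ^ n ∣ a - b := by
  rw [SModEq.sub_mem, mem_span_singleton_pow_smul_top_iff]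
  exact ⟨fun ⟨c, hc⟩ => ⟨c, hc.symm⟩, fun ⟨c, hc⟩ => ⟨c, hc.symm⟩⟩

theorem IsPrecomplete.exists_smodEq_sum_pow_smul [IsPrecomplete (Ideal.span {π}) M]
    (a : ℕ → M) : ∃ x : M, ∀ n,
      ∑ l ∈ range n, π ^ l • a l ≡ x [SMOD (Ideal.span {π} ^ n • ⊤ : Submodule V M)] := by
  refine IsPrecomplete.prec ‹_› fun {m n} hmn => ?_
  obtain ⟨k, rfl⟩ := Nat.exists_eq_add_of_le hmn
  rw [SModEq.sub_mem, sum_range_add, sub_add_cancel_left, neg_mem_iff,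
    mem_span_singleton_pow_smul_top_iff]
  exact ⟨∑ l ∈ range k, π ^ l • a (m + l), by simp only [smul_sum, smul_smul, pow_add]⟩

theorem exists_sub_map_sum_pow_smul_mem (φ : P →ₗ[V] M)
    (hφ : ∀ x, ∃ p, x - φ p ∈ (Ideal.span {π} • ⊤ : Submodule V M)) (m : M) :
    ∃ p : ℕ → P, ∀ n,
      m - φ (∑ l ∈ range n, π ^ l • p l) ∈ (Ideal.span {π} ^ n • ⊤ : Submodule V M) := by
  choose p y hy using fun x => (hφ x).imp fun _ => mem_span_singleton_smul_top_iff.1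
  -- `y^[n] m` is the remainder after the first `n` digits
  refine ⟨fun l => p (y^[l] m), fun n => mem_span_singleton_pow_smul_top_iff.2 ⟨y^[n] m, ?_⟩⟩
  induction n with
  | zero => simp
  | succ n ih =>
    rw [sum_range_succ, map_add, ← sub_sub, ← ih, map_smul, ← smul_sub, ← hy,
      Function.iterate_succ_apply', pow_succ, mul_smul]

theorem mem_pow_smul_top_of_map_mem (hπ : IsSMulRegular M π) (φ : P →ₗ[V] M)
    (hφ : ∀ p, φ p ∈ (Ideal.span {π} • ⊤ : Submodule V M) →
      p ∈ (Ideal.span {π} • ⊤ : Submodule V P)) (n : ℕ) (p : P)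
    (hp : φ p ∈ (Ideal.span {π} ^ n • ⊤ : Submodule V M)) :
    p ∈ (Ideal.span {π} ^ n • ⊤ : Submodule V P) := by
  induction n generalizing p with
  | zero => simp
  | succ n ih =>
    obtain ⟨q, rfl⟩ := mem_span_singleton_pow_smul_top_iff.1
      (ih p (Submodule.pow_smul_top_le _ _ n.le_succ hp))
    obtain ⟨y, hy⟩ := mem_span_singleton_pow_smul_top_iff.1 hp
    rw [map_smul, pow_succ', mul_smul, smul_comm] at hy
    obtain ⟨z, rfl⟩ := mem_span_singleton_smul_top_iff.1
      (hφ q (mem_span_singleton_smul_top_iff.2 ⟨y, hπ.pow n hy⟩))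
    exact mem_span_singleton_pow_smul_top_iff.2 ⟨z, by rw [pow_succ, mul_smul]⟩

end PowSMulTop

theorem mem_C0sub_iff_exists_finsupp {V : Type} [CommRing V] {π : V} {D : Type} {f : D → V} :
    f ∈ C0sub V π D ↔ ∀ n : ℕ, ∃ g : D →₀ V, ∀ d, π ^ n ∣ f d - g d := by
  refine ⟨fun hf n => ?_, fun h n => ?_⟩
  · classical
    refine ⟨ofSupportFinite (fun d => if π ^ n ∣ f d then 0 else f d)
      ((hf n).subset fun d hd h => hd (if_pos h)), fun d => ?_⟩
    by_cases h : π ^ n ∣ f d <;> simp [Finsupp.ofSupportFinite_coe, h]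
  · obtain ⟨g, hg⟩ := h n
    refine g.support.finite_toSet.subset fun d hd => ?_
    by_contra h
    exact hd (by simpa [Finsupp.notMem_support_iff.1 h] using hg d)

section AdicSum

variable {V : Type*} [CommRing V] {π : V} {M : Type*} [AddCommGroup M] [Module V M]
  {D : Type*} {e : D → M}

/-- Unordered `π`-adic convergence of `∑ d, f d • e d` to `x`. -/
def HasAdicSum (π : V) (e : D → M) (f : D → V) (x : M) : Prop :=
  ∀ n : ℕ, ∃ g : D →₀ V, (∀ d, π ^ n ∣ f d - g d) ∧
    x ≡ linearCombination V e g [SMOD (Ideal.span {π} ^ n • ⊤ : Submodule V M)]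

theorem linearCombination_smodEq_of_dvd_sub {n : ℕ} {g g' : D →₀ V}
    (h : ∀ d, π ^ n ∣ g d - g' d) :
    linearCombination V e g ≡ linearCombination V e g'
      [SMOD (Ideal.span {π} ^ n • ⊤ : Submodule V M)] := by
  rw [SModEq.sub_mem, ← map_sub, linearCombination_apply]
  refine Submodule.sum_mem _ fun d _ => mem_span_singleton_pow_smul_top_iff.2 ?_
  obtain ⟨c, hc⟩ := h d
  exact ⟨c • e d, by rw [smul_smul, ← hc, Finsupp.sub_apply]⟩

namespace HasAdicSum

variable {f f' : D → V} {x x' : M}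

theorem add (h : HasAdicSum π e f x) (h' : HasAdicSum π e f' x') :
    HasAdicSum π e (f + f') (x + x') := fun n => by
  obtain ⟨g, hfg, hxg⟩ := h n
  obtain ⟨g', hfg', hxg'⟩ := h' n
  refine ⟨g + g', fun d => ?_, by simpa only [map_add] using hxg.add hxg'⟩
  simpa only [Pi.add_apply, Finsupp.add_apply, add_sub_add_comm] using dvd_add (hfg d) (hfg' d)

theorem smul (h : HasAdicSum π e f x) (c : V) : HasAdicSum π e (c • f) (c • x) := fun n => by
  obtain ⟨g, hfg, hxg⟩ := h n
  refine ⟨c • g, fun d => ?_, by simpa only [map_smul] using hxg.smul c⟩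
  simpa only [Pi.smul_apply, Finsupp.smul_apply, smul_eq_mul, ← mul_sub] using (hfg d).mul_left c

theorem unique [IsHausdorff (Ideal.span {π}) M] (h : HasAdicSum π e f x)
    (h' : HasAdicSum π e f x') : x = x' := by
  refine (IsHausdorff.eq_iff_smodEq (I := Ideal.span {π})).2 fun n => ?_
  obtain ⟨g, hfg, hxg⟩ := h n
  obtain ⟨g', hfg', hxg'⟩ := h' n
  have hgg' : ∀ d, π ^ n ∣ g d - g' d := fun d => by
    simpa using dvd_sub (hfg' d) (hfg d)
  exact hxg.trans ((linearCombination_smodEq_of_dvd_sub hgg').trans hxg'.symm)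

theorem pow_dvd_of_zero (hπ : IsSMulRegular M π)
    (hind : ∀ g : D →₀ V, linearCombination V e g ∈ (Ideal.span {π} • ⊤ : Submodule V M) →
      g ∈ (Ideal.span {π} • ⊤ : Submodule V (D →₀ V)))
    (h : HasAdicSum π e f 0) (n : ℕ) (d : D) : π ^ n ∣ f d := by
  obtain ⟨g, hfg, hg⟩ := h n
  obtain ⟨u, rfl⟩ := mem_span_singleton_pow_smul_top_iff.1 <|
    mem_pow_smul_top_of_map_mem hπ _ hind n g (by simpa [SModEq.sub_mem] using hg.symm)
  simpa using dvd_add (hfg d) (dvd_mul_right (π ^ n) (u d))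

end HasAdicSum

end AdicSum

section AdicSumMap

variable {V : Type} [CommRing V] {π : V} {M : Type*} [AddCommGroup M] [Module V M]
  {D : Type} {e : D → M}

theorem HasAdicSum.mem_C0sub {f : D → V} {x : M} (h : HasAdicSum π e f x) :
    f ∈ C0sub V π D :=
  mem_C0sub_iff_exists_finsupp.2 fun n => (h n).imp fun _ hg => hg.1

variable (e) in
theorem exists_hasAdicSum [IsPrecomplete (Ideal.span {π}) M] {f : D → V}
    (hf : f ∈ C0sub V π D) : ∃ x, HasAdicSum π e f x := by
  choose g hg using mem_C0sub_iff_exists_finsupp.1 hf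
  have hcauchy : ∀ {m n}, m ≤ n → linearCombination V e (g m) ≡ linearCombination V e (g n)
      [SMOD (Ideal.span {π} ^ m • ⊤ : Submodule V M)] := fun {m n} hmn =>
    linearCombination_smodEq_of_dvd_sub fun d => by
      simpa using dvd_sub ((pow_dvd_pow π hmn).trans (hg n d)) (hg m d)
  obtain ⟨x, hx⟩ := IsPrecomplete.prec ‹_› hcauchy
  exact ⟨x, fun n => ⟨g n, hg n, (hx n).symm⟩⟩

variable [IsHausdorff (Ideal.span {π}) M] [IsPrecomplete (Ideal.span {π}) M]

variable (π e) in
noncomputable def adicSum : C0sub V π D →ₗ[V] M where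
  toFun f := (exists_hasAdicSum e f.2).choose
  map_add' f f' := (exists_hasAdicSum e (f + f').2).choose_spec.unique
    ((exists_hasAdicSum e f.2).choose_spec.add (exists_hasAdicSum e f'.2).choose_spec)
  map_smul' c f := (exists_hasAdicSum e (c • f).2).choose_spec.unique
    ((exists_hasAdicSum e f.2).choose_spec.smul c)

theorem hasAdicSum_adicSum (f : C0sub V π D) : HasAdicSum π e f (adicSum π e f) :=
  (exists_hasAdicSum e f.2).choose_spec

theorem adicSum_injective [IsHausdorff (Ideal.span {π}) V] (hπ : IsSMulRegular M π)
    (hind : ∀ g : D →₀ V, linearCombination V e g ∈ (Ideal.span {π} • ⊤ : Submodule V M) →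
      g ∈ (Ideal.span {π} • ⊤ : Submodule V (D →₀ V))) :
    Function.Injective (adicSum π e) := by
  refine (injective_iff_map_eq_zero _).2 fun f hf => ?_
  have hdvd := (hf ▸ hasAdicSum_adicSum f).pow_dvd_of_zero hπ hind
  ext d
  exact IsHausdorff.haus ‹_› _ fun n =>
    smodEq_span_singleton_pow_iff_dvd.2 (by simpa using hdvd n d)

theorem adicSum_surjective [IsPrecomplete (Ideal.span {π}) V]
    (hgen : ∀ x, ∃ g : D →₀ V,
      x - linearCombination V e g ∈ (Ideal.span {π} • ⊤ : Submodule V M)) :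
    Function.Surjective (adicSum π e) := by
  intro m
  obtain ⟨p, hp⟩ := exists_sub_map_sum_pow_smul_mem _ hgen m
  choose F hF using fun d => IsPrecomplete.exists_smodEq_sum_pow_smul (π := π) fun l => p l d
  have hsum : HasAdicSum π e F m := fun n => ⟨∑ l ∈ range n, π ^ l • p l, fun d => ?_,
    SModEq.sub_mem.2 (hp n)⟩
  · exact ⟨⟨F, hsum.mem_C0sub⟩, (hasAdicSum_adicSum _).unique hsum⟩
  · simpa [Finsupp.finsetSum_apply] using smodEq_span_singleton_pow_iff_dvd.1 (hF d n).symm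

end AdicSumMap

section BasisLift

variable {V : Type*} [CommRing V] {I : Ideal V} {M : Type*} [AddCommGroup M] [Module V M]
  {D : Type*} (b : Module.Basis D (V ⧸ I) (M ⧸ (I • ⊤ : Submodule V M))) {e : D → M}

theorem mk_linearCombination_of_lift_basis (he : ∀ d, Submodule.Quotient.mk (e d) = b d)
    (g : D →₀ V) :
    Submodule.Quotient.mk (linearCombination V e g) =
      b.repr.symm (g.mapRange (Ideal.Quotient.mk I) (map_zero _)) := by
  induction g using Finsupp.induction_linear with
  | zero => simp
  | add g g' hg hg' => simp [Finsupp.mapRange_add, hg, hg']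
  | single d a =>
    rw [Finsupp.linearCombination_single, Finsupp.mapRange_single, b.repr_symm_single, ← he,
      Module.Quotient.mk_smul_mk]

theorem exists_sub_linearCombination_mem_of_lift_basis
    (he : ∀ d, Submodule.Quotient.mk (e d) = b d) (x : M) :
    ∃ g : D →₀ V, x - linearCombination V e g ∈ (I • ⊤ : Submodule V M) := by
  obtain ⟨g, hg⟩ := Finsupp.mapRange_surjective _ (map_zero _) Ideal.Quotient.mk_surjective
    (b.repr (Submodule.Quotient.mk x))
  refine ⟨g, ?_⟩
  rw [← Submodule.Quotient.mk_eq_zero, Submodule.Quotient.mk_sub,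
    mk_linearCombination_of_lift_basis b he, hg, LinearEquiv.symm_apply_apply, sub_self]

theorem mem_smul_top_of_linearCombination_mem_of_lift_basis
    (he : ∀ d, Submodule.Quotient.mk (e d) = b d) (g : D →₀ V)
    (hg : linearCombination V e g ∈ (I • ⊤ : Submodule V M)) :
    g ∈ (I • ⊤ : Submodule V (D →₀ V)) := by
  rw [← Submodule.Quotient.mk_eq_zero, mk_linearCombination_of_lift_basis b he,
    LinearEquiv.map_eq_zero_iff] at hg
  rw [← g.sum_single]
  refine Submodule.sum_mem _ fun d _ => ?_
  have hd : g d ∈ I := by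
    simpa using Ideal.Quotient.eq_zero_iff_mem.1 (DFunLike.congr_fun hg d)
  simpa using Submodule.smul_mem_smul hd (Submodule.mem_top (x := Finsupp.single d (1 : V)))

end BasisLift

theorem structure_theorem_for_complete_torsionfree_modules
    (V : Type) [CommRing V] [IsDomain V] [IsDiscreteValuationRing V]
    (π : V) (hπ : Irreducible π)
    (hV : IsAdicComplete (Ideal.span {π}) V)
    (M : Type) [AddCommGroup M] [Module V M]
    (hM : IsAdicComplete (Ideal.span {π}) M)
    (htf : ∀ x : M, π • x = 0 → x = 0) :
    ∃ D : Type, Nonempty (M ≃ₗ[V] ↥(C0sub V π D)) := by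
  have := PrincipalIdealRing.isMaximal_of_irreducible hπ
  let _ := Ideal.Quotient.field (Ideal.span {π})
  let b := Module.Basis.ofVectorSpace (V ⧸ Ideal.span {π})
    (M ⧸ (Ideal.span {π} • ⊤ : Submodule V M))
  choose e he using fun d => Submodule.Quotient.mk_surjective _ (b d)
  have hinj := adicSum_injective (π := π) (.of_right_eq_zero_of_smul htf)
    (mem_smul_top_of_linearCombination_mem_of_lift_basis b he)
  have hsurj := adicSum_surjective (exists_sub_linearCombination_mem_of_lift_basis b he)
  exact ⟨_, ⟨(LinearEquiv.ofBijective (adicSum π e) ⟨hinj, hsurj⟩).symm⟩⟩
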